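/- For all integers 1 ≤ i < n and every s > 0, 1 − s·Σ_{j=0}^{n−1} ((s·I − Q^{(n)})^{−1})_{i,j} = [det(−Q^{(n)}) · det(s·I − Q^{(i)})] / [det(s·I − Q^{(n)}) · det(−Q^{(i)})]. (This is Corollary 2.1: the Laplace transform E e^{−s T_{i,n}} of the hitting time of n from i equals ∏_{ν=1}^n λ_ν^{(n)}/(s+λ_ν^{(n)}) divided by ∏_{ν=1}^i λ_ν^{(i)}/(s+λ_ν^{(i)}).) -/

import Mathlib

/-!
Write `D k = det (s • 1 - Q^(k))`. Expanding along the last row gives the three-term recurrence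
`D (k+2) = (s + a (k+1) + b (k+1)) D (k+1) - a (k+1) b k D k`, hence `det (-Q^(k)) = b 0 ⋯ b (k-1)`
and `D k > 0` for `s ≥ 0`. The same recurrence shows that `w k = D n - (b k ⋯ b (n-1)) D k`
solves `(s • 1 - Q^(n)) w = s D n 𝟙` (as a function on `{0,…,n}` it vanishes at the absorbing
state). Hence `1 - s ∑ j, (s • 1 - Q^(n))⁻¹ i j = 1 - w i / D n = (b i ⋯ b (n-1)) D i / D n`,
and the product `b i ⋯ b (n-1)` is the ratio `det (-Q^(n)) / det (-Q^(i))`.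
-/

/-- The generator `Q^(n)` of the birth–death chain on `{0,…,n}` absorbed at `n`,
restricted to the transient states `{0,…,n-1}`. -/
noncomputable def bdMatrix (a b : ℕ → ℝ) (n : ℕ) : Matrix (Fin n) (Fin n) ℝ :=
  fun i j =>
    if (j : ℕ) = (i : ℕ) + 1 then b i
    else if (i : ℕ) = (j : ℕ) + 1 then a i
    else if (i : ℕ) = (j : ℕ) then
      (if (i : ℕ) = 0 then -(b 0) else -(a i + b i))
    else 0

open Finset Matrix

theorem Matrix.det_succ_succ_of_lastRow_lastCol_eq_zero {R : Type*} [CommRing R] {k : ℕ}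
    (A : Matrix (Fin (k + 2)) (Fin (k + 2)) R)
    (hrow : ∀ j : Fin k, A (Fin.last _) j.castSucc.castSucc = 0)
    (hcol : ∀ i : Fin k, A i.castSucc.castSucc (Fin.last _) = 0) :
    A.det = A (Fin.last _) (Fin.last _) * (A.submatrix Fin.castSucc Fin.castSucc).det -
      A (Fin.last _) (Fin.last k).castSucc * A (Fin.last k).castSucc (Fin.last _) *
        (A.submatrix (Fin.castSucc ∘ Fin.castSucc) (Fin.castSucc ∘ Fin.castSucc)).det := by
  have hminor : (A.submatrix Fin.castSucc (Fin.last k).castSucc.succAbove).det =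
      A (Fin.last k).castSucc (Fin.last _) *
        (A.submatrix (Fin.castSucc ∘ Fin.castSucc) (Fin.castSucc ∘ Fin.castSucc)).det := by
    rw [det_succ_column _ (Fin.last k), Fin.sum_univ_castSucc]
    simp [hcol, Fin.succAbove_last, submatrix_submatrix, Function.comp_def,
      Fin.succAbove_castSucc_of_lt, Fin.castSucc_lt_last]
  rw [det_succ_row _ (Fin.last _), Fin.sum_univ_castSucc, Fin.sum_univ_castSucc]
  simp [hrow, Fin.succAbove_last, hminor, pow_add, ← mul_pow]
  ring

section
variable (a b : ℕ → ℝ)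

theorem bdMatrix_mulVec_apply {n : ℕ} (W : ℕ → ℝ) (hW : W n = 0) (j : Fin n) :
    (bdMatrix a b n *ᵥ fun k => W k) j =
      (if (j : ℕ) = 0 then 0 else a j * (W (j - 1) - W j)) + b j * (W (j + 1) - W j) := by
  obtain ⟨j, hj⟩ := j
  have hsplit : ∀ x : Fin n, bdMatrix a b n ⟨j, hj⟩ x * W x =
      (if (x : ℕ) = j + 1 then b j * W x else 0) + (if (x : ℕ) + 1 = j then a j * W x else 0) +
        (if (x : ℕ) = j then -((if j = 0 then 0 else a j) + b j) * W x else 0) := by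
    rintro ⟨x, hx⟩
    simp only [bdMatrix]
    split_ifs <;> first | omega | (subst_vars; ring)
  have hnext : (if j + 1 < n then b j * W (j + 1) else 0) = b j * W (j + 1) := by
    split_ifs with h
    · rfl
    · rw [show j + 1 = n by omega, hW, mul_zero]
  simp only [mulVec, dotProduct, hsplit, sum_add_distrib]
  rw [Fin.sum_univ_eq_sum_range (fun y => if y = j + 1 then b j * W y else 0),
    Fin.sum_univ_eq_sum_range (fun y => if y + 1 = j then a j * W y else 0),
    Fin.sum_univ_eq_sum_range (fun y => if y = j then _ * W y else 0)]
  simp only [sum_ite_eq', mem_range, hnext, if_pos hj]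
  rcases j with _ | m
  · simp
    ring
  · simp [show m < n by omega]
    ring

noncomputable def bdDet (s : ℝ) (n : ℕ) : ℝ :=
  (s • (1 : Matrix (Fin n) (Fin n) ℝ) - bdMatrix a b n).det

variable {a b} (s : ℝ)

theorem smul_one_sub_bdMatrix_submatrix_castSucc (n : ℕ) :
    (s • (1 : Matrix (Fin (n + 1)) (Fin (n + 1)) ℝ) - bdMatrix a b (n + 1)).submatrix
      Fin.castSucc Fin.castSucc = s • 1 - bdMatrix a b n := by
  ext i j
  simp [bdMatrix, one_apply]

theorem bdDet_zero : bdDet a b s 0 = 1 := det_fin_zero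

theorem bdDet_one : bdDet a b s 1 = s + b 0 := by
  simp [bdDet, bdMatrix]

theorem bdDet_add_two (k : ℕ) :
    bdDet a b s (k + 2) =
      (s + a (k + 1) + b (k + 1)) * bdDet a b s (k + 1) - a (k + 1) * b k * bdDet a b s k := by
  rw [bdDet, det_succ_succ_of_lastRow_lastCol_eq_zero, smul_one_sub_bdMatrix_submatrix_castSucc,
    ← submatrix_submatrix, smul_one_sub_bdMatrix_submatrix_castSucc,
    smul_one_sub_bdMatrix_submatrix_castSucc]
  · simp [bdDet, bdMatrix, one_apply, Fin.ext_iff]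
    rw [if_neg (by omega)]
    ring
  all_goals
    intro j
    have := j.isLt
    simp [bdMatrix, one_apply, Fin.ext_iff]
    split_ifs <;> first | omega | simp

theorem det_neg_bdMatrix (n : ℕ) : (-bdMatrix a b n).det = ∏ k ∈ range n, b k := by
  rw [← zero_sub, ← zero_smul ℝ (1 : Matrix (Fin n) (Fin n) ℝ)]
  change bdDet a b 0 n = _
  induction n using Nat.twoStepInduction with
  | zero => simp [bdDet_zero]
  | one => simp [bdDet_one]
  | more k ih₀ ih₁ =>
    rw [bdDet_add_two, ih₀, ih₁, prod_range_succ, prod_range_succ, prod_range_succ]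
    ring

variable {s}

theorem bdDet_pos (ha : ∀ k, 0 ≤ a (k + 1)) (hb : ∀ k, 0 < b k) (hs : 0 ≤ s) (n : ℕ) :
    0 < bdDet a b s n := by
  -- With `D = bdDet a b s`, the recurrence reads
  -- `D (k+1) - b k * D k = s * D k + a k * (D k - b (k-1) * D (k-1))`.
  suffices h : ∀ k, 0 < bdDet a b s k ∧ b k * bdDet a b s k ≤ bdDet a b s (k + 1) from (h n).1
  intro k
  induction k with
  | zero =>
    rw [bdDet_zero, bdDet_one]
    exact ⟨one_pos, by linarith⟩
  | succ k ih =>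
    have hpos : 0 < bdDet a b s (k + 1) := (mul_pos (hb k) ih.1).trans_le ih.2
    refine ⟨hpos, ?_⟩
    rw [bdDet_add_two]
    nlinarith [ha k, ih.2]

theorem smul_one_sub_bdMatrix_mulVec (n : ℕ) :
    (s • 1 - bdMatrix a b n) *ᵥ
        (fun k : Fin n => bdDet a b s n - (∏ r ∈ Ico (k : ℕ) n, b r) * bdDet a b s k) =
      fun _ => s * bdDet a b s n := by
  funext j
  rw [sub_mulVec, smul_mulVec, one_mulVec, Pi.sub_apply, Pi.smul_apply,
    bdMatrix_mulVec_apply a b (fun k => bdDet a b s n - (∏ r ∈ Ico k n, b r) * bdDet a b s k)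
      (by simp)]
  obtain ⟨_ | m, hj⟩ := j
  · simp [prod_range_eq_mul_Ico _ hj, bdDet_zero, bdDet_one]
    ring
  · simp [prod_eq_prod_Ico_succ_bot hj, prod_eq_prod_Ico_succ_bot (show m < n by omega),
      bdDet_add_two]
    ring

theorem one_sub_smul_sum_inv_apply {n : ℕ} (hD : bdDet a b s n ≠ 0) (i : Fin n) :
    1 - s * ∑ j, (s • 1 - bdMatrix a b n)⁻¹ i j =
      (∏ r ∈ Ico (i : ℕ) n, b r) * bdDet a b s i / bdDet a b s n := by
  have hunit : IsUnit (s • 1 - bdMatrix a b n).det := hD.isUnit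
  have hsolve := congrArg ((s • 1 - bdMatrix a b n)⁻¹ *ᵥ ·)
    (smul_one_sub_bdMatrix_mulVec (a := a) (b := b) (s := s) n)
  simp only [mulVec_mulVec, nonsing_inv_mul _ hunit, one_mulVec] at hsolve
  have hrow_i := congrFun hsolve i
  simp only [mulVec, dotProduct, ← sum_mul] at hrow_i
  rw [eq_div_iff hD]
  linear_combination hrow_i

end

theorem laplace_transform_hitting_time_ratio_general
    (a b : ℕ → ℝ) (ha : ∀ k, 1 ≤ k → 0 < a k) (hb : ∀ k, 0 < b k)
    (i n : ℕ) (hin : i < n)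
    (s : ℝ) (hs : 0 < s) :
    1 - s * ∑ j : Fin n,
        (s • (1 : Matrix (Fin n) (Fin n) ℝ) - bdMatrix a b n)⁻¹ ⟨i, hin⟩ j =
      ((-(bdMatrix a b n)).det *
          (s • (1 : Matrix (Fin i) (Fin i) ℝ) - bdMatrix a b i).det) /
        ((s • (1 : Matrix (Fin n) (Fin n) ℝ) - bdMatrix a b n).det *
          (-(bdMatrix a b i)).det) := by
  have hD : ∀ k, 0 < bdDet a b s k :=
    bdDet_pos (fun k => (ha (k + 1) k.succ_pos).le) hb hs.le
  have hprod : ∏ k ∈ range i, b k ≠ 0 := prod_ne_zero_iff.mpr fun k _ => (hb k).ne'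
  rw [one_sub_smul_sum_inv_apply (hD n).ne' ⟨i, hin⟩, det_neg_bdMatrix, det_neg_bdMatrix,
    ← prod_range_mul_prod_Ico b hin.le]
  change _ = _ * bdDet a b s i / (bdDet a b s n * _)
  field_simp

/-- Corollary 2.1: for `1 ≤ i < n` and `s > 0`, the Laplace transform of the
hitting time of `n` from `i` satisfies
`1 − s·Σ_j ((s•I − Q^{(n)})⁻¹)_{i,j}
  = det(−Q^{(n)})·det(s•I − Q^{(i)}) / (det(s•I − Q^{(n)})·det(−Q^{(i)}))`. -/
theorem laplace_transform_hitting_time_ratio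
    (a b : ℕ → ℝ) (ha : ∀ k, 1 ≤ k → 0 < a k) (hb : ∀ k, 0 < b k)
    (i n : ℕ) (hi : 1 ≤ i) (hin : i < n)
    (s : ℝ) (hs : 0 < s) :
    1 - s * ∑ j : Fin n,
        (s • (1 : Matrix (Fin n) (Fin n) ℝ) - bdMatrix a b n)⁻¹ ⟨i, hin⟩ j =
      ((-(bdMatrix a b n)).det *
          (s • (1 : Matrix (Fin i) (Fin i) ℝ) - bdMatrix a b i).det) /
        ((s • (1 : Matrix (Fin n) (Fin n) ℝ) - bdMatrix a b n).det *
          (-(bdMatrix a b i)).det) :=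
  laplace_transform_hitting_time_ratio_general a b ha hb i n hin s hs
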